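/- Let f : ℝ → ℂ be continuous and integrable with (1+y²)^{-1/2} f(y) ∈ L²(ℝ), and suppose that ∫_ℝ (1+y²)^{-n-1/2} f(y) dy = 0 for all n = 0, 1, 2, …. Then the even part of f vanishes: f(y) + f(-y) = 0 for all y. -/

import Mathlib

/-!
Under the substitution `t = (1 + y²)⁻¹ ∈ [0, 1]` the hypothesis says that the push-forward of the
complex measure `(1 + y²)^{-1/2} f(y) dy` to `[0, 1]` has vanishing moments `∫ tⁿ`, so by Weierstrass
approximation it annihilates every continuous function of `t`. Every even, continuous, compactly
supported `g` has the form `Φ((1 + y²)⁻¹) (1 + y²)^{-1/2}` with `Φ` continuous, hence `∫ g f = 0`.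
For an arbitrary test function `g`, `∫ g(y) (f y + f (-y)) dy = ∫ (g y + g (-y)) f(y) dy = 0`, so the
continuous function `f + f ∘ neg` vanishes almost everywhere, hence everywhere.
-/

open MeasureTheory Polynomial Set

section Moments

variable {α E : Type*} [MeasurableSpace α] {μ : Measure α}
  [NormedAddCommGroup E] [NormedSpace ℝ E] {φ : α → ℝ} {F : α → E}

theorem integral_eval_smul_eq_zero
    (hint : ∀ k : ℕ, Integrable (fun x => φ x ^ k • F x) μ)
    (hmom : ∀ k : ℕ, ∫ x, φ x ^ k • F x ∂μ = 0) (p : ℝ[X]) :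
    ∫ x, p.eval (φ x) • F x ∂μ = 0 := by
  simp_rw [eval_eq_sum_range, Finset.sum_smul, mul_smul]
  rw [integral_finsetSum _ fun k _ => ?_]
  · simp [integral_smul, hmom]
  · exact (hint k).smul (p.coeff k)

theorem integrable_comp_smul_of_mem_Icc {a b : ℝ} (hφ : Measurable φ) (hφab : ∀ x, φ x ∈ Icc a b)
    (hF : Integrable F μ) {q : ℝ → ℝ} (hq : Continuous q) :
    Integrable (fun x => q (φ x) • F x) μ := by
  obtain ⟨C, hC⟩ := isCompact_Icc.exists_bound_of_continuousOn hq.continuousOn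
  exact hF.bdd_smul C (hq.measurable.comp hφ).aestronglyMeasurable
    (ae_of_all _ fun x => hC _ (hφab x))

theorem integral_comp_smul_eq_zero_of_moments {a b : ℝ} (hφ : Measurable φ)
    (hφab : ∀ x, φ x ∈ Icc a b) (hF : Integrable F μ)
    (hmom : ∀ k : ℕ, ∫ x, φ x ^ k • F x ∂μ = 0) {Φ : ℝ → ℝ} (hΦ : Continuous Φ) :
    ∫ x, Φ (φ x) • F x ∂μ = 0 := by
  have hint {q : ℝ → ℝ} (hq : Continuous q) := integrable_comp_smul_of_mem_Icc hφ hφab hF hq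
  refine eq_of_forall_dist_le fun ε hε => ?_
  set c := ∫ x, ‖F x‖ ∂μ
  have hc : 0 ≤ c := integral_nonneg fun x => norm_nonneg _
  obtain ⟨p, hp⟩ := exists_polynomial_near_of_continuousOn a b Φ hΦ.continuousOn
    (ε / (c + 1)) (by positivity)
  have hpoly := integral_eval_smul_eq_zero (fun k => hint (continuous_pow k)) hmom p
  have hdiff : ∫ x, Φ (φ x) • F x ∂μ = ∫ x, (Φ (φ x) - p.eval (φ x)) • F x ∂μ := by
    simp_rw [sub_smul]
    rw [integral_sub (hint hΦ) (hint p.continuous), hpoly, sub_zero]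
  rw [dist_zero_right, hdiff]
  calc ‖∫ x, (Φ (φ x) - p.eval (φ x)) • F x ∂μ‖ ≤ ∫ x, ε / (c + 1) * ‖F x‖ ∂μ := by
        refine norm_integral_le_of_norm_le (hF.norm.const_mul _) (ae_of_all _ fun x => ?_)
        rw [norm_smul, Real.norm_eq_abs, abs_sub_comm]
        gcongr
        exact (hp _ (hφab x)).le
    _ = ε / (c + 1) * c := integral_const_mul _ _
    _ ≤ ε := by
        rw [div_mul_eq_mul_div, div_le_iff₀ (by positivity)]
        nlinarith

end Moments

/-- For even `g`, `g y = evenProfile g (1 + y²)⁻¹ / √(1 + y²)`. For `t ≤ 0` the factor `√t⁻¹` is the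
junk value `0`, so the profile is continuous on all of `ℝ` when `g` has compact support. -/
noncomputable def evenProfile (g : ℝ → ℝ) (t : ℝ) : ℝ := g √(t⁻¹ - 1) * √(t⁻¹)

theorem evenProfile_eq_zero_of_lt {g : ℝ → ℝ} {R : ℝ} (hR : 0 < R)
    (hg : ∀ x, R ≤ ‖x‖ → g x = 0) {t : ℝ} (ht : t < (1 + R ^ 2)⁻¹) : evenProfile g t = 0 := by
  rcases le_or_gt t 0 with h0 | h0
  · rw [evenProfile, Real.sqrt_eq_zero_of_nonpos (inv_nonpos.2 h0), mul_zero]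
  · have hlt : 1 + R ^ 2 < t⁻¹ := (lt_inv_comm₀ h0 (by positivity)).1 ht
    have hR' : R ≤ ‖√(t⁻¹ - 1)‖ := by
      rw [Real.norm_of_nonneg (Real.sqrt_nonneg _), Real.le_sqrt' hR]
      linarith
    rw [evenProfile, hg _ hR', zero_mul]

theorem continuous_evenProfile {g : ℝ → ℝ} (hg : Continuous g) (hgc : HasCompactSupport g) :
    Continuous (evenProfile g) := by
  obtain ⟨R, hR, hgR⟩ := hgc.exists_pos_le_norm
  refine continuous_iff_continuousAt.2 fun t => ?_
  rcases lt_or_ge t (1 + R ^ 2)⁻¹ with ht | ht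
  · exact continuousAt_const.congr <| Filter.eventually_of_mem (Iio_mem_nhds ht)
      fun s hs => (evenProfile_eq_zero_of_lt hR hgR hs).symm
  · have ht0 : t ≠ 0 := (lt_of_lt_of_le (by positivity) ht).ne'
    unfold evenProfile
    fun_prop (disch := exact ht0)

theorem evenProfile_inv_one_add_sq_mul {g : ℝ → ℝ} (heven : ∀ y, g (-y) = g y) (y : ℝ) :
    evenProfile g (1 + y ^ 2)⁻¹ * (√(1 + y ^ 2))⁻¹ = g y := by
  have hpos : 0 < √(1 + y ^ 2) := Real.sqrt_pos.2 (by positivity)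
  rw [evenProfile, inv_inv, add_sub_cancel_left, Real.sqrt_sq_eq_abs, mul_assoc,
    mul_inv_cancel₀ hpos.ne', mul_one]
  rcases abs_choice y with h | h <;> simp [h, heven]

section TestFunctions

variable {E : Type*} [NormedAddCommGroup E] [NormedSpace ℝ E]

theorem integral_smul_eq_zero_of_even {F : ℝ → E}
    (hF : ∀ Φ : ℝ → ℝ, Continuous Φ → ∫ y, Φ (1 + y ^ 2)⁻¹ • (√(1 + y ^ 2))⁻¹ • F y = 0)
    {g : ℝ → ℝ} (hg : Continuous g) (hgc : HasCompactSupport g) (heven : ∀ y, g (-y) = g y) :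
    ∫ y, g y • F y = 0 := by
  simpa [smul_smul, evenProfile_inv_one_add_sq_mul heven] using
    hF _ (continuous_evenProfile hg hgc)

theorem integral_smul_add_comp_neg {f : ℝ → E} (hf : Integrable f) {g : ℝ → ℝ}
    (hg : Continuous g) (hgc : HasCompactSupport g) :
    ∫ y, g y • (f y + f (-y)) = ∫ y, (g y + g (-y)) • f y := by
  have hneg : ∫ y, g y • f (-y) = ∫ y, g (-y) • f y := by
    rw [← integral_neg_eq_self]
    simp only [neg_neg]
  have h1 := hf.locallyIntegrable.integrable_smul_left_of_hasCompactSupport hg hgc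
  have h2 := hf.comp_neg.locallyIntegrable.integrable_smul_left_of_hasCompactSupport hg hgc
  have h3 : Integrable fun y => g (-y) • f y := by simpa using h2.comp_neg
  simp_rw [smul_add, add_smul]
  rw [integral_add h1 h2, integral_add h1 h3, hneg]

end TestFunctions

theorem Real.rpow_neg_natCast_sub_half {x : ℝ} (hx : 0 < x) (n : ℕ) :
    x ^ (-(n : ℝ) - 1 / 2) = x⁻¹ ^ n * (√x)⁻¹ := by
  rw [sub_eq_add_neg, Real.rpow_add hx, Real.rpow_neg hx.le, Real.rpow_natCast, inv_pow,
    Real.sqrt_eq_rpow, Real.rpow_neg hx.le]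

theorem inv_one_add_sq_mem_Icc (y : ℝ) : (1 + y ^ 2)⁻¹ ∈ Icc (0 : ℝ) 1 :=
  ⟨by positivity, inv_le_one_of_one_le₀ (by nlinarith)⟩

theorem stmt3_general (f : ℝ → ℂ) (hcont : Continuous f)
    (hint : Integrable f)
    (hmom : ∀ n : ℕ,
      ∫ y : ℝ, (((1 + y ^ 2 : ℝ) ^ (-(n : ℝ) - 1 / 2) : ℝ) : ℂ) * f y = 0) :
    ∀ y : ℝ, f y + f (-y) = 0 := by
  have hF : Integrable fun y : ℝ => (√(1 + y ^ 2))⁻¹ • f y := by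
    refine hint.bdd_smul (φ := fun y : ℝ => (√(1 + y ^ 2))⁻¹) 1 (by fun_prop)
      (ae_of_all _ fun y => ?_)
    rw [norm_inv, Real.norm_of_nonneg (Real.sqrt_nonneg _)]
    exact inv_le_one_of_one_le₀ (Real.one_le_sqrt.2 (by nlinarith))
  have hΦ (Φ : ℝ → ℝ) (hΦ : Continuous Φ) :
      ∫ y, Φ (1 + y ^ 2)⁻¹ • (√(1 + y ^ 2))⁻¹ • f y = 0 := by
    refine integral_comp_smul_eq_zero_of_moments (by fun_prop) inv_one_add_sq_mem_Icc hF
      (fun n => ?_) hΦ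
    have hw (y : ℝ) := Real.rpow_neg_natCast_sub_half (x := 1 + y ^ 2) (by positivity) n
    simpa only [hw, ← Complex.real_smul, ← smul_smul] using hmom n
  have hae : ∀ᵐ y, f y + f (-y) = 0 := by
    refine ae_eq_zero_of_integral_contDiff_smul_eq_zero
      (hint.add hint.comp_neg).locallyIntegrable fun g hg hgc => ?_
    rw [integral_smul_add_comp_neg hint hg.continuous hgc]
    exact integral_smul_eq_zero_of_even hΦ (by fun_prop)
      (hgc.add (hgc.comp_homeomorph (Homeomorph.neg ℝ))) fun y => by simp [add_comm]
  exact congrFun <|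
    ((hcont.add (hcont.comp continuous_neg)).ae_eq_iff_eq volume continuous_zero).1 hae

/-- Vanishing of all the moments `∫ (1+y²)^{-n-1/2} f(y) dy`, `n = 0, 1, 2, …`, of a
continuous integrable function `f` with `(1+y²)^{-1/2} f ∈ L²(ℝ)` forces the even part
of `f` to vanish: `f(y) + f(-y) = 0` for all `y`. -/
theorem stmt3 (f : ℝ → ℂ) (hcont : Continuous f)
    (hint : Integrable f)
    (hL2 : MemLp (fun y : ℝ => (((1 + y ^ 2 : ℝ) ^ (-(1 : ℝ) / 2) : ℝ) : ℂ) * f y) 2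
      (volume : Measure ℝ))
    (hmom : ∀ n : ℕ,
      ∫ y : ℝ, (((1 + y ^ 2 : ℝ) ^ (-(n : ℝ) - 1 / 2) : ℝ) : ℂ) * f y = 0) :
    ∀ y : ℝ, f y + f (-y) = 0 :=
  stmt3_general f hcont hint hmom
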